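/- Let n ≥ 1 and let r_0^sc,...,r_{n-1}^sc and r_0^ca,...,r_{n-1}^ca be real numbers in [0,1]. Define r^1P = 1 - ∏_{i=0}^{n-1}(1 - r_i^sc·r_i^ca) and r^2P = (1 - ∏_{i=0}^{n-1}(1 - r_i^sc))·(1 - ∏_{i=0}^{n-1}(1 - r_i^ca)). Then r^2P ≥ r^1P. -/

import Mathlib

/-!
Writing `a ∨ b := a + b - a b` for the probability that one of two independent events occurs,
the key identity is
`(a ∨ b) (c ∨ d) - (a c ∨ b d) = a d (1 - b) (1 - c) + b c (1 - a) (1 - d) ≥ 0`.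
Applied with `a, b` the failure probabilities of the paths seen so far and `c = 1 - p`,
`d = 1 - q` those of a new path (so that `c ∨ d = 1 - p q`), it carries the inequality
through an induction on the set of paths.
-/

open Finset Set

lemma mul_add_mul_sub_le_mul {a b c d : ℝ} (ha : a ∈ Icc (0 : ℝ) 1) (hb : b ∈ Icc (0 : ℝ) 1)
    (hc : c ∈ Icc (0 : ℝ) 1) (hd : d ∈ Icc (0 : ℝ) 1) :
    a * c + b * d - a * c * (b * d) ≤ (a + b - a * b) * (c + d - c * d) := by
  obtain ⟨ha₀, ha₁⟩ := ha
  obtain ⟨hb₀, hb₁⟩ := hb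
  obtain ⟨hc₀, hc₁⟩ := hc
  obtain ⟨hd₀, hd₁⟩ := hd
  have hgap : (a + b - a * b) * (c + d - c * d) - (a * c + b * d - a * c * (b * d)) =
      a * d * (1 - b) * (1 - c) + b * c * (1 - a) * (1 - d) := by ring
  have hpos : 0 ≤ a * d * (1 - b) * (1 - c) + b * c * (1 - a) * (1 - d) := by
    have := sub_nonneg.2 ha₁; have := sub_nonneg.2 hb₁
    have := sub_nonneg.2 hc₁; have := sub_nonneg.2 hd₁
    positivity
  linarith

theorem one_sub_prod_one_sub_mul_le {ι : Type*} [DecidableEq ι] (s : Finset ι) (p q : ι → ℝ)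
    (hp : ∀ i ∈ s, p i ∈ Icc (0 : ℝ) 1) (hq : ∀ i ∈ s, q i ∈ Icc (0 : ℝ) 1) :
    1 - ∏ i ∈ s, (1 - p i * q i) ≤ (1 - ∏ i ∈ s, (1 - p i)) * (1 - ∏ i ∈ s, (1 - q i)) := by
  induction s using Finset.induction_on with
  | empty => simp
  | insert j s hj ih =>
    rw [Finset.forall_mem_insert] at hp hq
    have ih := ih hp.2 hq.2
    rw [prod_insert hj, prod_insert hj, prod_insert hj]
    set A := ∏ i ∈ s, (1 - p i)
    set B := ∏ i ∈ s, (1 - q i)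
    have hpq : 0 ≤ 1 - p j * q j := (Icc.one_sub_mem (unitInterval.mul_mem hp.1 hq.1)).1
    have hstep := mul_add_mul_sub_le_mul
      (unitInterval.prod_mem fun i hi => Icc.one_sub_mem (hp.2 i hi))
      (unitInterval.prod_mem fun i hi => Icc.one_sub_mem (hq.2 i hi))
      (Icc.one_sub_mem hp.1) (Icc.one_sub_mem hq.1)
    have hor : A + B - A * B ≤ ∏ i ∈ s, (1 - p i * q i) := by linarith
    linear_combination hstep + mul_le_mul_of_nonneg_left hor hpq

theorem stmt_1_general (n : ℕ) (rsc rca : ℕ → ℝ)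
    (hsc : ∀ i < n, rsc i ∈ Set.Icc (0:ℝ) 1) (hca : ∀ i < n, rca i ∈ Set.Icc (0:ℝ) 1) :
    1 - ∏ i ∈ Finset.range n, (1 - rsc i * rca i) ≤
      (1 - ∏ i ∈ Finset.range n, (1 - rsc i)) * (1 - ∏ i ∈ Finset.range n, (1 - rca i)) :=
  one_sub_prod_one_sub_mul_le _ rsc rca (fun i hi => hsc i (mem_range.1 hi))
    fun i hi => hca i (mem_range.1 hi)

theorem stmt_1 (n : ℕ) (hn : 1 ≤ n) (rsc rca : ℕ → ℝ)
    (hsc : ∀ i < n, rsc i ∈ Set.Icc (0:ℝ) 1) (hca : ∀ i < n, rca i ∈ Set.Icc (0:ℝ) 1) :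
    1 - ∏ i ∈ Finset.range n, (1 - rsc i * rca i) ≤
      (1 - ∏ i ∈ Finset.range n, (1 - rsc i)) * (1 - ∏ i ∈ Finset.range n, (1 - rca i)) :=
  stmt_1_general n rsc rca hsc hca
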